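/- Let F be a 2×m real matrix (m ≥ 4) such that every 2×2 submatrix of F is invertible, and let X be an R^m random vector with F X = 0 a.s. and finite second moments. Write Z = (X_5,...,X_m). Suppose X' satisfies: (X'_1,X'_2,Z') ~ (X_1,X_2,Z), (X'_3,X'_4,Z') ~ (X_3,X_4,Z), (X'_1,X'_3) ~ (X_1,X_3), (X'_2,X'_4) ~ (X_2,X_4), and (X'_1,X'_4) ~ (X_1,X_4). Then X' ~ X. -/

import Mathlib

/-!
Indices are 1-based here, as in the paper. Every pair `(X'_i, X'_j)` other than
`(X'_2, X'_3)` has the law of `(X_i, X_j)`: the two triples give the pairs inside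
`{1, 2, 5, …, m}` and inside `{3, 4, 5, …, m}`, and the three pairs left over are assumed.
Hence `E[(w ⬝ᵥ X')²] = E[(w ⬝ᵥ X)²] = 0` for every combination `w` of the rows of `F` that
vanishes in column 2 or in column 3, and the two such combinations span the row space of `F`,
so `F X' = 0` a.s. Since columns 3 and 4 of `F` are independent, a vector of `ker F` is a
linear, hence measurable, function of its coordinates outside `{3, 4}`. So `X` and `X'` are
the same measurable function of `(X_1, X_2, Z)` and `(X'_1, X'_2, Z')`, which have the same
law.
-/

open MeasureTheory ProbabilityTheory Matrix

section TwoRows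

variable {R ι : Type*} [CommRing R] (F : Matrix (Fin 2) ι R)

def rowElim (a : ι) : ι → R := ![F 1 a, -F 0 a] ᵥ* F

theorem rowElim_self (a : ι) : rowElim F a a = 0 := by
  simp [rowElim, vecMul, dotProduct, Fin.sum_univ_two]
  ring

variable [Fintype ι]

theorem rowElim_dotProduct_eq_zero (a : ι) {x : ι → R} (hx : F *ᵥ x = 0) :
    rowElim F a ⬝ᵥ x = 0 := by
  rw [rowElim, ← dotProduct_mulVec, hx, dotProduct_zero]

variable [NoZeroDivisors R] {a b : ι} (hdet : (F.submatrix id ![a, b]).det ≠ 0)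
include hdet

theorem mulVec_eq_zero_of_rowElim_dotProduct {x : ι → R} (ha : rowElim F a ⬝ᵥ x = 0)
    (hb : rowElim F b ⬝ᵥ x = 0) : F *ᵥ x = 0 := by
  rw [rowElim, ← dotProduct_mulVec] at ha hb
  simp only [dotProduct, Fin.sum_univ_two, cons_val_zero, cons_val_one, cons_val_fin_one,
    neg_mul, det_fin_two, submatrix_apply, id_eq] at ha hb hdet
  set y := F *ᵥ x
  have h0 : y 0 * (F 0 a * F 1 b - F 0 b * F 1 a) = 0 := by
    linear_combination F 0 a * hb - F 0 b * ha
  have h1 : y 1 * (F 0 a * F 1 b - F 0 b * F 1 a) = 0 := by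
    linear_combination F 1 a * hb - F 1 b * ha
  ext r
  fin_cases r
  exacts [(mul_eq_zero.1 h0).resolve_right hdet, (mul_eq_zero.1 h1).resolve_right hdet]

theorem eq_zero_of_mulVec_eq_zero_of_forall_ne {x : ι → R} (hx : F *ᵥ x = 0)
    (hzero : ∀ k, k ≠ a → k ≠ b → x k = 0) : x = 0 := by
  have hab : a ≠ b := by
    rintro rfl
    simp [det_fin_two] at hdet
  have hsub : F.submatrix id ![a, b] *ᵥ ![x a, x b] = 0 := by
    rw [← hx]
    ext r
    rw [mulVec, dotProduct, Fin.sum_univ_two, mulVec, dotProduct,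
      Fintype.sum_eq_add a b hab fun k hk => by rw [hzero k hk.1 hk.2, mul_zero]]
    simp
  have hxab := eq_zero_of_mulVec_eq_zero hdet hsub
  ext k
  by_cases hka : k = a
  · simpa [hka] using congrFun hxab 0
  by_cases hkb : k = b
  · simpa [hkb] using congrFun hxab 1
  exact hzero k hka hkb

end TwoRows

section SecondMoments

variable {Ω Ω' ι : Type*} [MeasurableSpace Ω] [MeasurableSpace Ω'] {μ : Measure Ω}
  {ν : Measure Ω'} [Fintype ι]

theorem integral_sum_sq_eq {f : ι → Ω → ℝ} (hf : ∀ i, MemLp (f i) 2 μ) :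
    ∫ ω, (∑ i, f i ω) ^ 2 ∂μ = ∑ i, ∑ j, ∫ ω, f i ω * f j ω ∂μ := by
  have hint (i j : ι) : Integrable (fun ω => f i ω * f j ω) μ := (hf i).integrable_mul (hf j)
  simp_rw [sq, Finset.sum_mul_sum]
  rw [integral_finsetSum _ fun i _ => integrable_finsetSum _ fun j _ => hint i j]
  exact Finset.sum_congr rfl fun i _ => integral_finsetSum _ fun j _ => hint i j

theorem ae_dotProduct_eq_zero_of_identDistrib_pairs {Y : Ω → ι → ℝ} {Y' : Ω' → ι → ℝ}
    (w : ι → ℝ) (hY : ∀ i, MemLp (fun ω => Y ω i) 2 μ)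
    (hpair : ∀ i j, w i ≠ 0 → w j ≠ 0 →
      IdentDistrib (fun ω => (Y' ω i, Y' ω j)) (fun ω => (Y ω i, Y ω j)) ν μ)
    (h0 : ∀ᵐ ω ∂μ, w ⬝ᵥ Y ω = 0) : ∀ᵐ ω ∂ν, w ⬝ᵥ Y' ω = 0 := by
  have hY' (i : ι) : MemLp (fun ω => w i * Y' ω i) 2 ν := by
    by_cases hw : w i = 0
    · simp [hw]
    · exact (((hpair i i hw hw).comp measurable_fst).symm.memLp_snd (hY i)).const_mul (w i)
  have hcross (i j : ι) : ∫ ω, w i * Y' ω i * (w j * Y' ω j) ∂ν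
      = ∫ ω, w i * Y ω i * (w j * Y ω j) ∂μ := by
    by_cases hw : w i = 0 ∨ w j = 0
    · rcases hw with hw | hw <;> simp [hw]
    · rw [not_or] at hw
      exact ((hpair i j hw.1 hw.2).comp ((measurable_const.mul measurable_fst).mul
        (measurable_const.mul measurable_snd))).integral_eq
  have hsq : ∫ ω, (w ⬝ᵥ Y' ω) ^ 2 ∂ν = 0 := calc
    _ = ∑ i, ∑ j, ∫ ω, w i * Y ω i * (w j * Y ω j) ∂μ := by
      simp only [dotProduct, integral_sum_sq_eq hY', hcross]
    _ = ∫ ω, (w ⬝ᵥ Y ω) ^ 2 ∂μ := (integral_sum_sq_eq fun i => (hY i).const_mul (w i)).symm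
    _ = 0 := integral_eq_zero_of_ae (by filter_upwards [h0] with ω h; simp [h])
  have hint : Integrable (fun ω => (w ⬝ᵥ Y' ω) ^ 2) ν := by
    simpa [dotProduct] using (memLp_finsetSum' Finset.univ fun i _ => hY' i).integrable_sq
  filter_upwards [(integral_eq_zero_iff_of_nonneg (fun ω => sq_nonneg _) hint).1 hsq] with ω h
  exact pow_eq_zero_iff two_ne_zero |>.1 h

theorem ae_mulVec_eq_zero_of_identDistrib_pairs {Y : Ω → ι → ℝ} {Y' : Ω' → ι → ℝ}
    (F : Matrix (Fin 2) ι ℝ) {a b : ι} (hdet : (F.submatrix id ![a, b]).det ≠ 0)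
    (hY : ∀ i, MemLp (fun ω => Y ω i) 2 μ) (hY0 : ∀ᵐ ω ∂μ, F *ᵥ Y ω = 0)
    (hpair : ∀ i j, ¬(i = a ∧ j = b) → ¬(i = b ∧ j = a) →
      IdentDistrib (fun ω => (Y' ω i, Y' ω j)) (fun ω => (Y ω i, Y ω j)) ν μ) :
    ∀ᵐ ω ∂ν, F *ᵥ Y' ω = 0 := by
  have hYa : ∀ᵐ ω ∂ν, rowElim F a ⬝ᵥ Y' ω = 0 :=
    ae_dotProduct_eq_zero_of_identDistrib_pairs _ hY
      (fun i j hi hj => hpair i j (fun h => hi (h.1 ▸ rowElim_self F a))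
        (fun h => hj (h.2 ▸ rowElim_self F a)))
      (hY0.mono fun _ => rowElim_dotProduct_eq_zero F a)
  have hYb : ∀ᵐ ω ∂ν, rowElim F b ⬝ᵥ Y' ω = 0 :=
    ae_dotProduct_eq_zero_of_identDistrib_pairs _ hY
      (fun i j hi hj => hpair i j (fun h => hj (h.2 ▸ rowElim_self F b))
        (fun h => hi (h.1 ▸ rowElim_self F b)))
      (hY0.mono fun _ => rowElim_dotProduct_eq_zero F b)
  filter_upwards [hYa, hYb] with ω ha hb
  exact mulVec_eq_zero_of_rowElim_dotProduct F hdet ha hb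

end SecondMoments

section Pairs

variable {Ω Ω' ι β : Type*} [MeasurableSpace Ω] [MeasurableSpace Ω'] [MeasurableSpace β]
  {μ : Measure Ω} {ν : Measure Ω'} {X : Ω → ι → β} {X' : Ω' → ι → β}

theorem exists_measurable_eval_eq {P : ι → Prop} {a b i : ι} (hi : i = a ∨ i = b ∨ P i) :
    ∃ s : β × β × ({k // P k} → β) → β, Measurable s ∧
      ∀ x : ι → β, s (x a, x b, fun k => x k) = x i := by
  rcases hi with rfl | rfl | hi
  · exact ⟨Prod.fst, measurable_fst, fun _ => rfl⟩
  · exact ⟨fun p => p.2.1, measurable_fst.comp measurable_snd, fun _ => rfl⟩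
  · exact ⟨fun p => p.2.2 ⟨i, hi⟩,
      (measurable_pi_apply _).comp (measurable_snd.comp measurable_snd), fun _ => rfl⟩

theorem ProbabilityTheory.IdentDistrib.pair_of_triple {P : ι → Prop} {a b i j : ι}
    (h : IdentDistrib (fun ω => (X' ω a, X' ω b, fun k : {k // P k} => X' ω k))
      (fun ω => (X ω a, X ω b, fun k : {k // P k} => X ω k)) ν μ)
    (hi : i = a ∨ i = b ∨ P i) (hj : j = a ∨ j = b ∨ P j) :
    IdentDistrib (fun ω => (X' ω i, X' ω j)) (fun ω => (X ω i, X ω j)) ν μ := by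
  obtain ⟨si, hsi, hsi_eval⟩ := exists_measurable_eval_eq (β := β) hi
  obtain ⟨sj, hsj, hsj_eval⟩ := exists_measurable_eval_eq (β := β) hj
  simpa only [Function.comp_def, hsi_eval, hsj_eval] using h.comp (hsi.prodMk hsj)

theorem identDistrib_pair_of_cover {P : ι → Prop} {a b c d : ι}
    (hcover : ∀ k, k = a ∨ k = b ∨ k = c ∨ k = d ∨ P k)
    (hab : IdentDistrib (fun ω => (X' ω a, X' ω b, fun k : {k // P k} => X' ω k))
      (fun ω => (X ω a, X ω b, fun k : {k // P k} => X ω k)) ν μ)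
    (hcd : IdentDistrib (fun ω => (X' ω c, X' ω d, fun k : {k // P k} => X' ω k))
      (fun ω => (X ω c, X ω d, fun k : {k // P k} => X ω k)) ν μ)
    (hac : IdentDistrib (fun ω => (X' ω a, X' ω c)) (fun ω => (X ω a, X ω c)) ν μ)
    (hbd : IdentDistrib (fun ω => (X' ω b, X' ω d)) (fun ω => (X ω b, X ω d)) ν μ)
    (had : IdentDistrib (fun ω => (X' ω a, X' ω d)) (fun ω => (X ω a, X ω d)) ν μ)
    (i j : ι) (hij : ¬(i = b ∧ j = c)) (hji : ¬(i = c ∧ j = b)) :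
    IdentDistrib (fun ω => (X' ω i, X' ω j)) (fun ω => (X ω i, X ω j)) ν μ := by
  -- in the two excluded cases `tauto` closes the goal from `hij` or `hji`
  rcases hcover i with rfl | rfl | rfl | rfl | hi <;>
  rcases hcover j with rfl | rfl | rfl | rfl | hj <;>
  first
    | exact hab.pair_of_triple (by tauto) (by tauto)
    | exact hcd.pair_of_triple (by tauto) (by tauto)
    | exact hac | exact hbd | exact had
    | exact hac.comp measurable_swap | exact hbd.comp measurable_swap
    | exact had.comp measurable_swap

end Pairs

theorem exists_measurable_leftInverseOn {𝕜 V E : Type*} [NontriviallyNormedField 𝕜]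
    [CompleteSpace 𝕜] [NormedAddCommGroup V] [NormedSpace 𝕜 V] [MeasurableSpace V]
    [BorelSpace V] [NormedAddCommGroup E] [NormedSpace 𝕜 E] [FiniteDimensional 𝕜 E]
    [MeasurableSpace E] [BorelSpace E] (π : V →ₗ[𝕜] E) (S : Submodule 𝕜 V)
    (hπ : ∀ x ∈ S, π x = 0 → x = 0) :
    ∃ g : E → V, Measurable g ∧ ∀ x ∈ S, g (π x) = x := by
  obtain ⟨ψ, hψ⟩ := (π.domRestrict S).exists_leftInverse_of_injective <|
    (LinearMap.ker_eq_bot').2 fun x hx => Subtype.ext (hπ x x.2 hx)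
  exact ⟨S.subtype ∘ₗ ψ, (LinearMap.continuous_of_finiteDimensional _).measurable,
    fun x hx => congrArg Subtype.val (LinearMap.congr_fun hψ ⟨x, hx⟩)⟩

theorem ProbabilityTheory.IdentDistrib.of_ae_eq_comp {Ω Ω' γ β : Type*} [MeasurableSpace Ω]
    [MeasurableSpace Ω'] [MeasurableSpace γ] [MeasurableSpace β] {μ : Measure Ω}
    {ν : Measure Ω'} {T : Ω → γ} {T' : Ω' → γ} {X : Ω → β} {X' : Ω' → β} {g : γ → β}
    (h : IdentDistrib T' T ν μ) (hg : Measurable g) (hX' : X' =ᵐ[ν] g ∘ T')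
    (hX : X =ᵐ[μ] g ∘ T) : IdentDistrib X' X ν μ :=
  ((IdentDistrib.of_ae_eq (hg.comp_aemeasurable h.aemeasurable_fst) hX'.symm).symm.trans
    (h.comp hg)).trans (IdentDistrib.of_ae_eq (hg.comp_aemeasurable h.aemeasurable_snd) hX.symm)

/-- Corollary 2 of the Fundamental Property of Polytope Codes. `F` is a `2 × m` matrix
(`m ≥ 4`) all of whose `2 × 2` submatrices are nonsingular, `F X = 0` a.s., and the five
marginal constraints on `X'` (with `Z = (X_5,…,X_m)`) force `X' ~ X`. -/
theorem stmt5 {Ω Ω' : Type*} [MeasurableSpace Ω] [MeasurableSpace Ω']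
    (μ : Measure Ω) (ν : Measure Ω')
    (m : ℕ) (hm : 4 ≤ m) (F : Matrix (Fin 2) (Fin m) ℝ)
    (hF : ∀ i j : Fin m, i ≠ j → (F.submatrix id ![i, j]).det ≠ 0)
    (X : Ω → Fin m → ℝ) (X' : Ω' → Fin m → ℝ)
    (hX2 : ∀ i, MemLp (fun ω => X ω i) 2 μ)
    (hX0 : ∀ᵐ ω ∂μ, F.mulVec (X ω) = 0)
    (h12Z : IdentDistrib
      (fun ω => (X' ω ⟨0, by omega⟩, X' ω ⟨1, by omega⟩,
        fun i : {i : Fin m // 4 ≤ (i : ℕ)} => X' ω i))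
      (fun ω => (X ω ⟨0, by omega⟩, X ω ⟨1, by omega⟩,
        fun i : {i : Fin m // 4 ≤ (i : ℕ)} => X ω i)) ν μ)
    (h34Z : IdentDistrib
      (fun ω => (X' ω ⟨2, by omega⟩, X' ω ⟨3, by omega⟩,
        fun i : {i : Fin m // 4 ≤ (i : ℕ)} => X' ω i))
      (fun ω => (X ω ⟨2, by omega⟩, X ω ⟨3, by omega⟩,
        fun i : {i : Fin m // 4 ≤ (i : ℕ)} => X ω i)) ν μ)
    (h13 : IdentDistrib (fun ω => (X' ω ⟨0, by omega⟩, X' ω ⟨2, by omega⟩))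
      (fun ω => (X ω ⟨0, by omega⟩, X ω ⟨2, by omega⟩)) ν μ)
    (h24 : IdentDistrib (fun ω => (X' ω ⟨1, by omega⟩, X' ω ⟨3, by omega⟩))
      (fun ω => (X ω ⟨1, by omega⟩, X ω ⟨3, by omega⟩)) ν μ)
    (h14 : IdentDistrib (fun ω => (X' ω ⟨0, by omega⟩, X' ω ⟨3, by omega⟩))
      (fun ω => (X ω ⟨0, by omega⟩, X ω ⟨3, by omega⟩)) ν μ) :
    IdentDistrib X' X ν μ := by
  set n0 : Fin m := ⟨0, by omega⟩
  set n1 : Fin m := ⟨1, by omega⟩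
  set n2 : Fin m := ⟨2, by omega⟩
  set n3 : Fin m := ⟨3, by omega⟩
  have hcover (k : Fin m) : k = n0 ∨ k = n1 ∨ k = n2 ∨ k = n3 ∨ 4 ≤ (k : ℕ) := by
    simp only [n0, n1, n2, n3, Fin.ext_iff]
    omega
  have hX'ker : ∀ᵐ ω ∂ν, F *ᵥ X' ω = 0 :=
    ae_mulVec_eq_zero_of_identDistrib_pairs F (hF n1 n2 (by simp [n1, n2])) hX2 hX0
      (identDistrib_pair_of_cover (P := fun k : Fin m => 4 ≤ (k : ℕ)) hcover h12Z h34Z h13 h24 h14)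
  let π : (Fin m → ℝ) →ₗ[ℝ] ℝ × ℝ × ({i : Fin m // 4 ≤ (i : ℕ)} → ℝ) :=
    (LinearMap.proj n0).prod ((LinearMap.proj n1).prod (LinearMap.pi fun i => LinearMap.proj i.1))
  obtain ⟨g, hg, hgπ⟩ := exists_measurable_leftInverseOn π (LinearMap.ker F.mulVecLin)
    fun x hx hπx => eq_zero_of_mulVec_eq_zero_of_forall_ne F (hF n2 n3 (by simp [n2, n3])) hx
      fun k h2 h3 => by
        change (x n0, x n1, fun i : {i : Fin m // 4 ≤ (i : ℕ)} => x i) = 0 at hπx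
        simp only [Prod.mk_eq_zero, funext_iff] at hπx
        rcases hcover k with rfl | rfl | rfl | rfl | hk
        exacts [hπx.1, hπx.2.1, (h2 rfl).elim, (h3 rfl).elim, hπx.2.2 ⟨k, hk⟩]
  exact h12Z.of_ae_eq_comp hg (hX'ker.mono fun ω h => (hgπ _ h).symm)
    (hX0.mono fun ω h => (hgπ _ h).symm)
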